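/- The logics il⁻(uJ1, I2, I3) and il are deductively equivalent: they prove exactly the same L(□,I)-formulas. -/
import Mathlib


/-- Formulas of the language L(□,I) of unary interpretability logic. -/
inductive UFml : Type
  | bot : UFml
  | var : ℕ → UFml
  | imp : UFml → UFml → UFml
  | box : UFml → UFml
  | I : UFml → UFml
  deriving DecidableEq

namespace UFml
def neg (A : UFml) : UFml := A.imp bot
def top : UFml := UFml.bot.imp UFml.bot
def or (A B : UFml) : UFml := A.neg.imp B
def and (A B : UFml) : UFml := (A.imp B.neg).neg
def dia (A : UFml) : UFml := (A.neg.box).neg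
end UFml

/-- Propositional tautologies of L(□,I). -/
def UTaut (A : UFml) : Prop :=
  ∀ v : UFml → Bool, v UFml.bot = false →
    (∀ B C : UFml, v (B.imp C) = (!(v B) || v C)) → v A = true

/-- Provability in il⁻ extended by an additional set `Ax` of axioms.
Axioms: G1' (tautologies), G2, G3 (Löb), uJ6 (□⊥ ↔ I⊥, both directions);
rules: modus ponens, necessitation, uR. -/
inductive IlMinus (Ax : UFml → Prop) : UFml → Prop
  | ax {A : UFml} : Ax A → IlMinus Ax A
  | taut {A : UFml} : UTaut A → IlMinus Ax A
  | G2 (A B : UFml) : IlMinus Ax (((A.imp B).box).imp ((A.box).imp (B.box)))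
  | G3 (A : UFml) : IlMinus Ax ((((A.box).imp A).box).imp (A.box))
  | uJ6a : IlMinus Ax ((UFml.bot.box).imp (UFml.I UFml.bot))
  | uJ6b : IlMinus Ax ((UFml.I UFml.bot).imp (UFml.bot.box))
  | mp {A B : UFml} : IlMinus Ax (A.imp B) → IlMinus Ax A → IlMinus Ax B
  | nec {A : UFml} : IlMinus Ax A → IlMinus Ax (A.box)
  | uR {A B : UFml} : IlMinus Ax (A.imp B) → IlMinus Ax ((UFml.I A).imp (UFml.I B))

/-- The axiom schema uJ1 : □A → IA. -/
def uJ1Ax : UFml → Prop := fun F => ∃ A : UFml, F = (A.box).imp (UFml.I A)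

/-- The axiom schema uJ15 : □(A ∨ ◇A) → IA. -/
def uJ15Ax : UFml → Prop := fun F => ∃ A : UFml, F = ((A.or A.dia).box).imp (UFml.I A)

/-- The axiom schema I1 : I□⊥. -/
def I1Ax : UFml → Prop := fun F => F = UFml.I (UFml.bot.box)

/-- The axiom schema I2 : □(A→B) → (IA → IB). -/
def I2Ax : UFml → Prop :=
  fun F => ∃ A B : UFml, F = ((A.imp B).box).imp ((UFml.I A).imp (UFml.I B))

/-- The axiom schema I3 : I(A ∨ ◇A) → IA. -/
def I3Ax : UFml → Prop := fun F => ∃ A : UFml, F = (UFml.I (A.or A.dia)).imp (UFml.I A)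

/-- The axiom schema I4 : IA ∧ ◇⊤ → ◇A. -/
def I4Ax : UFml → Prop := fun F => ∃ A : UFml, F = ((UFml.I A).and UFml.top.dia).imp A.dia

/-- De Rijke's unary interpretability logic il: axioms G1', G2, G3, I1, I2, I3, I4;
rules modus ponens and necessitation. -/
inductive Il : UFml → Prop
  | taut {A : UFml} : UTaut A → Il A
  | G2 (A B : UFml) : Il (((A.imp B).box).imp ((A.box).imp (B.box)))
  | G3 (A : UFml) : Il ((((A.box).imp A).box).imp (A.box))
  | I1 : Il (UFml.I (UFml.bot.box))
  | I2 (A B : UFml) : Il (((A.imp B).box).imp ((UFml.I A).imp (UFml.I B)))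
  | I3 (A : UFml) : Il ((UFml.I (A.or A.dia)).imp (UFml.I A))
  | I4 (A : UFml) : Il (((UFml.I A).and UFml.top.dia).imp A.dia)
  | mp {A B : UFml} : Il (A.imp B) → Il A → Il B
  | nec {A : UFml} : Il A → Il (A.box)

section Helpers

open UFml

/-- tautology: syllogism -/
lemma T_syll (A B C : UFml) : UTaut ((A.imp B).imp ((B.imp C).imp (A.imp C))) := by
  intro v hb hi
  simp only [hi, hb]
  cases v A <;> cases v B <;> cases v C <;> simp

/-- tautology: weakening -/
lemma T_weak (A B : UFml) : UTaut (A.imp (B.imp A)) := by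
  intro v hb hi
  simp only [hi, hb]
  cases v A <;> cases v B <;> simp

/-- tautology: permutation/const -/
lemma T_const (X Z W : UFml) : UTaut ((X.imp (Z.imp W)).imp (Z.imp (X.imp W))) := by
  intro v hb hi
  simp only [hi, hb]
  cases v X <;> cases v Z <;> cases v W <;> simp

/-- tautology: contraposition -/
lemma T_contra (X Y : UFml) : UTaut ((X.imp Y).imp (Y.neg.imp X.neg)) := by
  intro v hb hi
  simp only [UFml.neg, hi, hb]
  cases v X <;> cases v Y <;> simp

lemma T_negbot : UTaut UFml.bot.neg := by
  intro v hb hi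
  simp only [UFml.neg, hi, hb]
  decide

lemma T_negtop_bot : UTaut (UFml.top.neg.imp UFml.bot) := by
  intro v hb hi
  simp only [UFml.neg, UFml.top, hi, hb]
  decide

lemma T_bot_negtop : UTaut (UFml.bot.imp UFml.top.neg) := by
  intro v hb hi
  simp only [UFml.neg, UFml.top, hi, hb]
  decide

/-- tautology used to derive uJ6b in il -/
lemma T_uj6b :
    UTaut ((((UFml.I UFml.bot).and UFml.top.dia).imp UFml.bot.dia).imp
      ((UFml.bot.neg.box).imp (((UFml.top.neg.box).imp (UFml.bot.box)).imp
        ((UFml.I UFml.bot).imp (UFml.bot.box))))) := by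
  intro v hb hi
  simp only [UFml.and, UFml.dia, UFml.neg, UFml.top, hi, hb]
  cases v (UFml.I UFml.bot) <;>
    cases v (((UFml.top.imp UFml.bot).box)) <;>
      cases v (((UFml.bot.imp UFml.bot).box)) <;>
        cases v (UFml.bot.box) <;> simp [UFml.top]

/-- tautology used to derive I4 in il⁻ -/
lemma T_i4 (A : UFml) :
    UTaut (((A.neg.box).imp ((UFml.I A).imp (UFml.I UFml.bot))).imp
      (((UFml.I UFml.bot).imp (UFml.bot.box)).imp
        (((UFml.bot.box).imp (UFml.top.neg.box)).imp
          (((UFml.I A).and UFml.top.dia).imp A.dia)))) := by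
  intro v hb hi
  simp only [UFml.and, UFml.dia, UFml.neg, UFml.top, hi, hb]
  cases v (UFml.I A) <;>
    cases v (UFml.I UFml.bot) <;>
      cases v ((A.imp UFml.bot).box) <;>
        cases v (UFml.bot.box) <;>
          cases v (((UFml.bot.imp UFml.bot).imp UFml.bot).box) <;> simp [UFml.top]

-- Helpers for Il

lemma Il.syll {A B C : UFml} (h1 : Il (A.imp B)) (h2 : Il (B.imp C)) :
    Il (A.imp C) :=
  Il.mp (Il.mp (Il.taut (T_syll A B C)) h1) h2

lemma Il.boxMono {A B : UFml} (h : Il (A.imp B)) : Il ((A.box).imp (B.box)) :=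
  Il.mp (Il.G2 A B) (Il.nec h)

/-- uJ1 is derivable in il. -/
lemma il_uJ1 (A : UFml) : Il ((A.box).imp (UFml.I A)) := by
  have h1 : Il (A.imp ((UFml.bot.box).imp A)) := Il.taut (T_weak A (UFml.bot.box))
  have h2 := Il.boxMono h1
  have h3 := Il.I2 (UFml.bot.box) A
  have h4 := Il.syll h2 h3
  exact Il.mp (Il.mp (Il.taut (T_const (A.box) (UFml.I (UFml.bot.box)) (UFml.I A))) h4) Il.I1

/-- uJ6b is derivable in il. -/
lemma il_uJ6b : Il ((UFml.I UFml.bot).imp (UFml.bot.box)) := by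
  have d1 := Il.I4 UFml.bot
  have d2 : Il (UFml.bot.neg.box) := Il.nec (Il.taut T_negbot)
  have d3 : Il ((UFml.top.neg.box).imp (UFml.bot.box)) := Il.boxMono (Il.taut T_negtop_bot)
  exact Il.mp (Il.mp (Il.mp (Il.taut T_uj6b) d1) d2) d3

-- Helpers for IlMinus

def AxU : UFml → Prop := fun F => uJ1Ax F ∨ I2Ax F ∨ I3Ax F

lemma IM.uJ1 (A : UFml) : IlMinus AxU ((A.box).imp (UFml.I A)) :=
  IlMinus.ax (Or.inl ⟨A, rfl⟩)

lemma IM.I2 (A B : UFml) :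
    IlMinus AxU (((A.imp B).box).imp ((UFml.I A).imp (UFml.I B))) :=
  IlMinus.ax (Or.inr (Or.inl ⟨A, B, rfl⟩))

lemma IM.I3 (A : UFml) :
    IlMinus AxU ((UFml.I (A.or A.dia)).imp (UFml.I A)) :=
  IlMinus.ax (Or.inr (Or.inr ⟨A, rfl⟩))

lemma IM.boxMono {A B : UFml} (h : IlMinus AxU (A.imp B)) :
    IlMinus AxU ((A.box).imp (B.box)) :=
  IlMinus.mp (IlMinus.G2 A B) (IlMinus.nec h)

/-- I1 is derivable in il⁻(uJ1, I2, I3). -/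
lemma IM.I1 : IlMinus AxU (UFml.I (UFml.bot.box)) := by
  have g3 := IlMinus.G3 (Ax := AxU) UFml.bot
  -- g3 : □(□⊥→⊥) → □⊥
  have h1 : IlMinus AxU ((UFml.bot.box).or ((UFml.bot.box).dia)) :=
    IlMinus.mp (IlMinus.taut (T_contra (((UFml.bot.box).imp UFml.bot).box) (UFml.bot.box))) g3
  have h2 := IlMinus.nec h1
  have h3 := IlMinus.mp (IM.uJ1 ((UFml.bot.box).or ((UFml.bot.box).dia))) h2
  exact IlMinus.mp (IM.I3 (UFml.bot.box)) h3

/-- I4 is derivable in il⁻(uJ1, I2, I3). -/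
lemma IM.I4 (A : UFml) :
    IlMinus AxU (((UFml.I A).and UFml.top.dia).imp A.dia) := by
  have a : IlMinus AxU ((A.neg.box).imp ((UFml.I A).imp (UFml.I UFml.bot))) :=
    IM.I2 A UFml.bot
  have b := IlMinus.uJ6b (Ax := AxU)
  have c : IlMinus AxU ((UFml.bot.box).imp (UFml.top.neg.box)) :=
    IM.boxMono (IlMinus.taut T_bot_negtop)
  exact IlMinus.mp (IlMinus.mp (IlMinus.mp (IlMinus.taut (T_i4 A)) a) b) c

end Helpers

/-- il⁻(uJ1, I2, I3) and il are deductively equivalent. -/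
theorem ilMinus_uJ1_I2_I3_equiv_il (A : UFml) :
    IlMinus (fun F => uJ1Ax F ∨ I2Ax F ∨ I3Ax F) A ↔ Il A := by
  constructor
  · intro h
    induction h with
    | ax hax =>
      rcases hax with ⟨B, rfl⟩ | ⟨B, C, rfl⟩ | ⟨B, rfl⟩
      · exact il_uJ1 B
      · exact Il.I2 B C
      · exact Il.I3 B
    | taut h => exact Il.taut h
    | G2 A B => exact Il.G2 A B
    | G3 A => exact Il.G3 A
    | uJ6a => exact il_uJ1 UFml.bot
    | uJ6b => exact il_uJ6b
    | mp _ _ ih1 ih2 => exact Il.mp ih1 ih2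
    | nec _ ih => exact Il.nec ih
    | uR _ ih => exact Il.mp (Il.I2 _ _) (Il.nec ih)
  · intro h
    induction h with
    | taut h => exact IlMinus.taut h
    | G2 A B => exact IlMinus.G2 A B
    | G3 A => exact IlMinus.G3 A
    | I1 => exact IM.I1
    | I2 A B => exact IM.I2 A B
    | I3 A => exact IM.I3 A
    | I4 A => exact IM.I4 A
    | mp _ _ ih1 ih2 => exact IlMinus.mp ih1 ih2
    | nec _ ih => exact IlMinus.nec ih
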